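/- arXiv:1001.0629 — 2 statements merged into one kernel-verified Lean document; each statement's English description precedes it below -/
import Mathlib

section
/- Let N be a finite directed network with source s, sink t, and nonnegative real edge capacities, and let f be a feasible flow. If P is an f-augmenting path from s to t with positive leeway ε (so that every forward edge e of P satisfies f(e) + ε ≤ c(e) and every backward edge e of P satisfies f(e) − ε ≥ 0), then the function f' obtained from f by increasing the flow by ε on each forward edge of P and decreasing it by ε on each backward edge of P is a feasible flow with value(f') = value(f) + ε. -/
lemma sum_ite_exists_right {V : Type*} [Fintype V] {k : ℕ}
    (p : Fin k → Prop) (a b : Fin k → V) (hb : Function.Injective b)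
    (v : V) (ε : ℝ)
    [∀ u : V, Decidable (∃ i, p i ∧ a i = u ∧ b i = v)]
    [Decidable (∃ i, p i ∧ b i = v)] :
    ∑ u : V, (if ∃ i, p i ∧ a i = u ∧ b i = v then ε else 0)
      = if ∃ i, p i ∧ b i = v then ε else 0 := by
  classical
  by_cases h : ∃ i, p i ∧ b i = v
  · obtain ⟨i, hp, hbv⟩ := h
    rw [if_pos ⟨i, hp, hbv⟩]
    have key : ∀ u : V, (if ∃ j, p j ∧ a j = u ∧ b j = v then ε else 0)
        = if u = a i then ε else 0 := by
      intro u
      by_cases hu : u = a i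
      · rw [if_pos ⟨i, hp, hu.symm, hbv⟩, if_pos hu]
      · rw [if_neg, if_neg hu]
        rintro ⟨j, hpj, haj, hbj⟩
        exact hu (by rw [← haj, hb (hbj.trans hbv.symm)])
    rw [Finset.sum_congr rfl fun u _ => key u]
    simp
  · rw [if_neg h]
    refine Finset.sum_eq_zero fun u _ => if_neg ?_
    rintro ⟨j, hpj, _, hbj⟩
    exact h ⟨j, hpj, hbj⟩

lemma sum_ite_exists_left {V : Type*} [Fintype V] {k : ℕ}
    (p : Fin k → Prop) (a b : Fin k → V) (ha : Function.Injective a)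
    (v : V) (ε : ℝ)
    [∀ u : V, Decidable (∃ i, p i ∧ a i = v ∧ b i = u)]
    [Decidable (∃ i, p i ∧ a i = v)] :
    ∑ u : V, (if ∃ i, p i ∧ a i = v ∧ b i = u then ε else 0)
      = if ∃ i, p i ∧ a i = v then ε else 0 := by
  classical
  by_cases h : ∃ i, p i ∧ a i = v
  · obtain ⟨i, hp, hav⟩ := h
    rw [if_pos ⟨i, hp, hav⟩]
    have key : ∀ u : V, (if ∃ j, p j ∧ a j = v ∧ b j = u then ε else 0)
        = if u = b i then ε else 0 := by
      intro u
      by_cases hu : u = b i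
      · rw [if_pos ⟨i, hp, hav, hu.symm⟩, if_pos hu]
      · rw [if_neg, if_neg hu]
        rintro ⟨j, hpj, haj, hbj⟩
        exact hu (by rw [← hbj, ha (haj.trans hav.symm)])
    rw [Finset.sum_congr rfl fun u _ => key u]
    simp
  · rw [if_neg h]
    refine Finset.sum_eq_zero fun u _ => if_neg ?_
    rintro ⟨j, hpj, haj, _⟩
    exact h ⟨j, hpj, haj⟩



/-- A feasible flow: `0 ≤ f e ≤ c e` on every edge. -/
def FeasibleFlow {V : Type*} (c f : V → V → ℝ) : Prop :=
  ∀ u v, 0 ≤ f u v ∧ f u v ≤ c u v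

/-- Flow conservation at every vertex other than the source `s` and the sink `t`:
total flow in equals total flow out. -/
def Conserved {V : Type*} [Fintype V] (f : V → V → ℝ) (s t : V) : Prop :=
  ∀ v, v ≠ s → v ≠ t → ∑ u, f u v = ∑ w, f v w

/-- The value of a flow: the net flow out of the source `s`. -/
def flowValue {V : Type*} [Fintype V] (f : V → V → ℝ) (s : V) : ℝ :=
  ∑ w, f s w - ∑ u, f u s

/-- Augmenting along an `f`-augmenting path `P` from `s` to `t` with positive
leeway `ε` yields a feasible flow whose value is larger by `ε`.

The path `P` is given by its (distinct) vertices `w 0 = s, …, w (last) = t`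
together with a direction `dir i` for each of its `k ≥ 1` steps: step `i` goes
from `w i` to `w (i+1)`, and is either a forward edge `(w i, w (i+1))`
(when `dir i = true`) satisfying `f e + ε ≤ c e`, or a backward edge
`(w (i+1), w i)` (when `dir i = false`) satisfying `f e - ε ≥ 0`.
The new flow `f'` increases `f` by `ε` on each forward edge of `P` and
decreases it by `ε` on each backward edge of `P`. -/
theorem augment_along_path
    {V : Type*} [Fintype V] [DecidableEq V]
    (c f : V → V → ℝ) (s t : V)
    (hfeas : FeasibleFlow c f)
    (hcons : Conserved f s t)
    (k : ℕ) (hk : 0 < k)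
    (w : Fin (k + 1) → V) (dir : Fin k → Bool)
    (hinj : Function.Injective w)
    (hs : w 0 = s) (ht : w (Fin.last k) = t)
    (ε : ℝ) (hε : 0 < ε)
    (hfwd : ∀ i : Fin k, dir i = true →
      f (w i.castSucc) (w i.succ) + ε ≤ c (w i.castSucc) (w i.succ))
    (hbwd : ∀ i : Fin k, dir i = false →
      0 ≤ f (w i.succ) (w i.castSucc) - ε)
    (f' : V → V → ℝ)
    (hf' : ∀ a b, f' a b =
      f a b
        + (if ∃ i : Fin k, dir i = true ∧ w i.castSucc = a ∧ w i.succ = b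
            then ε else 0)
        - (if ∃ i : Fin k, dir i = false ∧ w i.succ = a ∧ w i.castSucc = b
            then ε else 0)) :
    FeasibleFlow c f' ∧ Conserved f' s t ∧
      flowValue f' s = flowValue f s + ε := by
  classical
  have hsucc_inj : Function.Injective (fun i : Fin k => w i.succ) :=
    fun i j h => Fin.succ_injective _ (hinj h)
  have hcast_inj : Function.Injective (fun i : Fin k => w i.castSucc) :=
    fun i j h => Fin.castSucc_injective _ (hinj h)
  -- forward and backward edges never coincide
  have hnodup : ∀ a b : V,
      (∃ i : Fin k, dir i = true ∧ w i.castSucc = a ∧ w i.succ = b) →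
      (∃ i : Fin k, dir i = false ∧ w i.succ = a ∧ w i.castSucc = b) → False := by
    rintro a b ⟨i, _, hia, hib⟩ ⟨j, _, hja, hjb⟩
    have h1 : i.castSucc = j.succ := hinj (hia.trans hja.symm)
    have h2 : i.succ = j.castSucc := hinj (hib.trans hjb.symm)
    have v1 := congrArg Fin.val h1
    have v2 := congrArg Fin.val h2
    simp [Fin.val_succ] at v1 v2
    omega
  -- sums of f' along rows and columns
  have hin : ∀ v : V, ∑ u, f' u v = ∑ u, f u v
      + (if ∃ i : Fin k, dir i = true ∧ w i.succ = v then ε else 0)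
      - (if ∃ i : Fin k, dir i = false ∧ w i.castSucc = v then ε else 0) := by
    intro v
    rw [Finset.sum_congr rfl fun u _ => hf' u v, Finset.sum_sub_distrib,
      Finset.sum_add_distrib,
      sum_ite_exists_right (fun i => dir i = true) (fun i => w i.castSucc)
        (fun i => w i.succ) hsucc_inj v ε,
      sum_ite_exists_right (fun i => dir i = false) (fun i => w i.succ)
        (fun i => w i.castSucc) hcast_inj v ε]
  have hout : ∀ v : V, ∑ u, f' v u = ∑ u, f v u
      + (if ∃ i : Fin k, dir i = true ∧ w i.castSucc = v then ε else 0)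
      - (if ∃ i : Fin k, dir i = false ∧ w i.succ = v then ε else 0) := by
    intro v
    rw [Finset.sum_congr rfl fun u _ => hf' v u, Finset.sum_sub_distrib,
      Finset.sum_add_distrib,
      sum_ite_exists_left (fun i => dir i = true) (fun i => w i.castSucc)
        (fun i => w i.succ) hcast_inj v ε,
      sum_ite_exists_left (fun i => dir i = false) (fun i => w i.succ)
        (fun i => w i.castSucc) hsucc_inj v ε]
  refine ⟨?_, ?_, ?_⟩
  · -- feasibility
    intro a b
    rw [hf' a b]
    by_cases hF : ∃ i : Fin k, dir i = true ∧ w i.castSucc = a ∧ w i.succ = b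
    · rw [if_pos hF, if_neg (fun hB => hnodup a b hF hB)]
      obtain ⟨i, hdi, hia, hib⟩ := hF
      subst hia; subst hib
      exact ⟨by linarith [(hfeas (w i.castSucc) (w i.succ)).1], by
        simpa using hfwd i hdi⟩
    · rw [if_neg hF]
      by_cases hB : ∃ i : Fin k, dir i = false ∧ w i.succ = a ∧ w i.castSucc = b
      · rw [if_pos hB]
        obtain ⟨i, hdi, hia, hib⟩ := hB
        subst hia; subst hib
        exact ⟨by simpa using hbwd i hdi, by
          linarith [(hfeas (w i.succ) (w i.castSucc)).2]⟩
      · rw [if_neg hB]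
        simpa using hfeas a b
  · -- conservation
    intro v hvs hvt
    rw [hin v, hout v, hcons v hvs hvt]
    have key :
        (if ∃ i : Fin k, dir i = true ∧ w i.succ = v then ε else 0)
        - (if ∃ i : Fin k, dir i = false ∧ w i.castSucc = v then ε else 0)
        = (if ∃ i : Fin k, dir i = true ∧ w i.castSucc = v then ε else 0)
        - (if ∃ i : Fin k, dir i = false ∧ w i.succ = v then ε else 0) := by
      by_cases h1 : ∃ i : Fin k, w i.succ = v
      · obtain ⟨i1, h1⟩ := h1
        have hi1k : (i1 : ℕ) + 1 < k := by
          rcases Nat.lt_or_ge ((i1 : ℕ) + 1) k with h | h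
          · exact h
          · exfalso
            have : i1.succ = Fin.last k := by
              apply Fin.ext; simp [Fin.val_succ, Fin.val_last]
              omega
            exact hvt (by rw [← h1, this, ht])
        set i2 : Fin k := ⟨(i1 : ℕ) + 1, hi1k⟩ with hi2
        have h2 : w i2.castSucc = v := by
          have : i2.castSucc = i1.succ := by apply Fin.ext; simp [hi2]
          rw [this, h1]
        have usucc : ∀ j : Fin k, w j.succ = v → j = i1 :=
          fun j hj => hsucc_inj (hj.trans h1.symm)
        have ucast : ∀ j : Fin k, w j.castSucc = v → j = i2 :=
          fun j hj => hcast_inj (hj.trans h2.symm)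
        have e1 : (if ∃ i : Fin k, dir i = true ∧ w i.succ = v then ε else 0)
            = if dir i1 = true then ε else 0 := by
          by_cases hd : dir i1 = true
          · rw [if_pos ⟨i1, hd, h1⟩, if_pos hd]
          · rw [if_neg, if_neg hd]
            rintro ⟨j, hj, hjv⟩; exact hd ((usucc j hjv) ▸ hj)
        have e2 : (if ∃ i : Fin k, dir i = false ∧ w i.succ = v then ε else 0)
            = if dir i1 = false then ε else 0 := by
          by_cases hd : dir i1 = false
          · rw [if_pos ⟨i1, hd, h1⟩, if_pos hd]
          · rw [if_neg, if_neg hd]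
            rintro ⟨j, hj, hjv⟩; exact hd ((usucc j hjv) ▸ hj)
        have e3 : (if ∃ i : Fin k, dir i = true ∧ w i.castSucc = v then ε else 0)
            = if dir i2 = true then ε else 0 := by
          by_cases hd : dir i2 = true
          · rw [if_pos ⟨i2, hd, h2⟩, if_pos hd]
          · rw [if_neg, if_neg hd]
            rintro ⟨j, hj, hjv⟩; exact hd ((ucast j hjv) ▸ hj)
        have e4 : (if ∃ i : Fin k, dir i = false ∧ w i.castSucc = v then ε else 0)
            = if dir i2 = false then ε else 0 := by
          by_cases hd : dir i2 = false
          · rw [if_pos ⟨i2, hd, h2⟩, if_pos hd]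
          · rw [if_neg, if_neg hd]
            rintro ⟨j, hj, hjv⟩; exact hd ((ucast j hjv) ▸ hj)
        rw [e1, e2, e3, e4]
        cases hd1 : dir i1 <;> cases hd2 : dir i2 <;> simp
      · push_neg at h1
        have h2 : ∀ j : Fin k, w j.castSucc ≠ v := by
          intro j hj
          rcases Nat.eq_zero_or_pos (j : ℕ) with hj0 | hj0
          · have : j.castSucc = (0 : Fin (k + 1)) := by
              apply Fin.ext; simpa using hj0
            exact hvs (by rw [← hj, this, hs])
          · have hlt : (j : ℕ) - 1 < k := lt_of_le_of_lt (Nat.sub_le _ _) j.isLt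
            have : (⟨(j : ℕ) - 1, hlt⟩ : Fin k).succ = j.castSucc := by
              apply Fin.ext; simp [Fin.val_succ]; omega
            exact h1 _ (this.symm ▸ hj)
        have n1 : ¬∃ i : Fin k, dir i = true ∧ w i.succ = v := by
          rintro ⟨j, _, hj⟩; exact h1 j hj
        have n2 : ¬∃ i : Fin k, dir i = false ∧ w i.castSucc = v := by
          rintro ⟨j, _, hj⟩; exact h2 j hj
        have n3 : ¬∃ i : Fin k, dir i = true ∧ w i.castSucc = v := by
          rintro ⟨j, _, hj⟩; exact h2 j hj
        have n4 : ¬∃ i : Fin k, dir i = false ∧ w i.succ = v := by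
          rintro ⟨j, _, hj⟩; exact h1 j hj
        rw [if_neg n1, if_neg n2, if_neg n3, if_neg n4]
    linarith [key]
  · -- flow value
    have hns : ∀ j : Fin k, w j.succ ≠ s := by
      intro j hj
      have : j.succ = (0 : Fin (k + 1)) := hinj (hj.trans hs.symm)
      exact (Fin.succ_ne_zero j) this
    set i0 : Fin k := ⟨0, hk⟩ with hi0
    have h0 : w i0.castSucc = s := by
      have : i0.castSucc = (0 : Fin (k + 1)) := by apply Fin.ext; simp [hi0]
      rw [this, hs]
    have ucast : ∀ j : Fin k, w j.castSucc = s → j = i0 :=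
      fun j hj => hcast_inj (hj.trans h0.symm)
    have e1 : (if ∃ i : Fin k, dir i = true ∧ w i.succ = s then ε else 0) = 0 := by
      rw [if_neg]; rintro ⟨j, _, hj⟩; exact hns j hj
    have e2 : (if ∃ i : Fin k, dir i = false ∧ w i.succ = s then ε else 0) = 0 := by
      rw [if_neg]; rintro ⟨j, _, hj⟩; exact hns j hj
    have e3 : (if ∃ i : Fin k, dir i = true ∧ w i.castSucc = s then ε else 0)
        = if dir i0 = true then ε else 0 := by
      by_cases hd : dir i0 = true
      · rw [if_pos ⟨i0, hd, h0⟩, if_pos hd]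
      · rw [if_neg, if_neg hd]
        rintro ⟨j, hj, hjv⟩; exact hd ((ucast j hjv) ▸ hj)
    have e4 : (if ∃ i : Fin k, dir i = false ∧ w i.castSucc = s then ε else 0)
        = if dir i0 = false then ε else 0 := by
      by_cases hd : dir i0 = false
      · rw [if_pos ⟨i0, hd, h0⟩, if_pos hd]
      · rw [if_neg, if_neg hd]
        rintro ⟨j, hj, hjv⟩; exact hd ((ucast j hjv) ▸ hj)
    have hv1 := hin s
    have hv2 := hout s
    rw [e1, e4] at hv1
    rw [e3, e2] at hv2
    unfold flowValue
    cases hd : dir i0 <;> rw [hd] at hv1 hv2 <;> simp at hv1 hv2 <;> linarith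
end

section
/- Let N be a finite directed network with source s, sink t, and nonnegative real edge capacities, and let f be a feasible flow admitting no f-augmenting path from s to t. Let S be the set of vertices reachable from s along f-augmenting walks (i.e., the set of vertices labeled by the Ford–Fulkerson labeling procedure) and T its complement. Then t ∈ T, every edge from S to T is saturated (f(e) = c(e)), every edge from T to S carries zero flow, and consequently value(f) = cap([S, T]); hence f is a maximum flow and [S, T] is a minimum cut. -/
/-- The capacity of the source/sink cut `[S, Sᶜ]`: the sum of capacities of
edges directed from `S` to its complement. -/
def cutCap {V : Type*} [Fintype V] [DecidableEq V] (c : V → V → ℝ) (S : Finset V) : ℝ :=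
  ∑ u ∈ S, ∑ v ∈ Sᶜ, c u v

/-- `v` is reachable from `s` along an `f`-augmenting walk: there is a walk
`w 0 = s, …, w (last) = v` in the underlying undirected graph each of whose
steps is either a forward edge with `f e < c e` or a backward edge with
`f e > 0` (this is exactly the set of vertices labeled by the Ford–Fulkerson
labeling procedure). -/
def AugReachable {V : Type*} (c f : V → V → ℝ) (s v : V) : Prop :=
  ∃ (k : ℕ) (w : Fin (k + 1) → V) (dir : Fin k → Bool),
    w 0 = s ∧ w (Fin.last k) = v ∧
    ∀ i : Fin k,
      (dir i = true → f (w i.castSucc) (w i.succ) < c (w i.castSucc) (w i.succ)) ∧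
      (dir i = false → 0 < f (w i.succ) (w i.castSucc))

lemma augReachable_self {V : Type*} (c f : V → V → ℝ) (s : V) : AugReachable c f s s :=
  ⟨0, fun _ => s, Fin.elim0, rfl, rfl, fun i => i.elim0⟩

lemma augReachable_step {V : Type*} (c f : V → V → ℝ) (s u v : V)
    (h : AugReachable c f s u) (hstep : f u v < c u v ∨ 0 < f v u) :
    AugReachable c f s v := by
  obtain ⟨k, w, dir, h0, hl, hst⟩ := h
  refine ⟨k + 1, Fin.snoc w v, Fin.snoc dir (decide (f u v < c u v)), ?_, ?_, ?_⟩
  · rw [show (0 : Fin (k+2)) = (0 : Fin (k+1)).castSucc by rfl, Fin.snoc_castSucc]; exact h0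
  · simp [Fin.snoc_last]
  · intro i
    refine Fin.lastCases ?_ ?_ i
    · have ha : (Fin.snoc w v : Fin (k+2) → V) (Fin.last k).castSucc = u := by
        rw [Fin.snoc_castSucc, hl]
      have hb : (Fin.snoc w v : Fin (k+2) → V) (Fin.last k).succ = v := by
        rw [Fin.succ_last, Fin.snoc_last]
      have hd : (Fin.snoc dir (decide (f u v < c u v)) : Fin (k+1) → Bool) (Fin.last k) =
          decide (f u v < c u v) := Fin.snoc_last ..
      rw [ha, hb, hd]
      constructor
      · intro h'; simpa using h'
      · intro h'
        rcases hstep with h'' | h''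
        · simp [h''] at h'
        · exact h''
    · intro j
      have hc1 : (Fin.snoc w v : Fin (k+2) → V) (j.castSucc).castSucc = w j.castSucc :=
        Fin.snoc_castSucc ..
      have hc2 : (Fin.snoc w v : Fin (k+2) → V) (j.castSucc).succ = w j.succ := by
        rw [Fin.succ_castSucc, Fin.snoc_castSucc]
      have hd : (Fin.snoc dir (decide (f u v < c u v)) : Fin (k+1) → Bool) j.castSucc = dir j :=
        Fin.snoc_castSucc ..
      rw [hc1, hc2, hd]
      exact hst j

lemma flowValue_eq_cut {V : Type*} [Fintype V] [DecidableEq V] (f : V → V → ℝ) (s t : V)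
    (hcons : Conserved f s t) (S : Finset V) (hs : s ∈ S) (ht : t ∉ S) :
    flowValue f s = ∑ u ∈ S, ∑ v ∈ Sᶜ, f u v - ∑ u ∈ Sᶜ, ∑ v ∈ S, f u v := by
  have h1 : ∑ u ∈ S, (∑ w, f u w - ∑ x, f x u) = flowValue f s := by
    rw [Finset.sum_eq_single_of_mem s hs]
    · rfl
    · intro u hu hus
      have hut : u ≠ t := fun h => ht (h ▸ hu)
      have := hcons u hus hut
      linarith
  rw [← h1, Finset.sum_sub_distrib]
  have e1 : ∑ u ∈ S, ∑ w, f u w = ∑ u ∈ S, ∑ w ∈ S, f u w + ∑ u ∈ S, ∑ w ∈ Sᶜ, f u w := by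
    rw [← Finset.sum_add_distrib]
    exact Finset.sum_congr rfl fun u _ => (Finset.sum_add_sum_compl S _).symm
  have e2 : ∑ u ∈ S, ∑ x, f x u = ∑ u ∈ S, ∑ x ∈ S, f x u + ∑ u ∈ S, ∑ x ∈ Sᶜ, f x u := by
    rw [← Finset.sum_add_distrib]
    exact Finset.sum_congr rfl fun u _ => (Finset.sum_add_sum_compl S _).symm
  have e3 : ∑ u ∈ S, ∑ x ∈ S, f x u = ∑ u ∈ S, ∑ w ∈ S, f u w := Finset.sum_comm
  have e4 : ∑ u ∈ S, ∑ x ∈ Sᶜ, f x u = ∑ x ∈ Sᶜ, ∑ u ∈ S, f x u := Finset.sum_comm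
  rw [e1, e2, e3, e4]; ring

lemma flowValue_le_cutCap {V : Type*} [Fintype V] [DecidableEq V] (c g : V → V → ℝ) (s t : V)
    (hfeas : FeasibleFlow c g) (hcons : Conserved g s t)
    (S : Finset V) (hs : s ∈ S) (ht : t ∉ S) :
    flowValue g s ≤ cutCap c S := by
  rw [flowValue_eq_cut g s t hcons S hs ht]
  have h1 : ∑ u ∈ S, ∑ v ∈ Sᶜ, g u v ≤ ∑ u ∈ S, ∑ v ∈ Sᶜ, c u v :=
    Finset.sum_le_sum fun u _ => Finset.sum_le_sum fun v _ => (hfeas u v).2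
  have h2 : (0:ℝ) ≤ ∑ u ∈ Sᶜ, ∑ v ∈ S, g u v :=
    Finset.sum_nonneg fun u _ => Finset.sum_nonneg fun v _ => (hfeas u v).1
  unfold cutCap
  linarith

/-- If the feasible flow `f` admits no `f`-augmenting path from `s` to `t`, and
`S` is the set of vertices reachable from `s` along `f`-augmenting walks (the
vertices labeled by the Ford–Fulkerson labeling procedure), then `t ∉ S`,
every edge from `S` to its complement is saturated, every edge from the
complement into `S` carries zero flow, `value(f) = cap([S, Sᶜ])`, and
consequently `f` is a maximum flow and `[S, Sᶜ]` is a minimum cut. -/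
theorem labeling_terminates_at_min_cut
    {V : Type*} [Fintype V] [DecidableEq V]
    (c f : V → V → ℝ) (s t : V)
    (hc : ∀ u v, 0 ≤ c u v)
    (hfeas : FeasibleFlow c f)
    (hcons : Conserved f s t)
    (hnoaug : ¬ AugReachable c f s t)
    (S : Finset V) (hS : ∀ v, v ∈ S ↔ AugReachable c f s v) :
    t ∉ S ∧
    (∀ u ∈ S, ∀ v ∉ S, f u v = c u v) ∧
    (∀ u ∉ S, ∀ v ∈ S, f u v = 0) ∧
    flowValue f s = cutCap c S ∧
    (∀ g : V → V → ℝ, FeasibleFlow c g → Conserved g s t →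
        flowValue g s ≤ flowValue f s) ∧
    (∀ S' : Finset V, s ∈ S' → t ∉ S' → cutCap c S ≤ cutCap c S') := by

  have hsS : s ∈ S := (hS s).mpr (augReachable_self c f s)
  have htS : t ∉ S := fun h => hnoaug ((hS t).mp h)
  have hsat : ∀ u ∈ S, ∀ v ∉ S, f u v = c u v := by
    intro u hu v hv
    by_contra hne
    have hlt : f u v < c u v := lt_of_le_of_ne (hfeas u v).2 hne
    exact hv ((hS v).mpr (augReachable_step c f s u v ((hS u).mp hu) (Or.inl hlt)))
  have hzero : ∀ u ∉ S, ∀ v ∈ S, f u v = 0 := by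
    intro u hu v hv
    by_contra hne
    have hpos : 0 < f u v := lt_of_le_of_ne (hfeas u v).1 (Ne.symm hne)
    exact hu ((hS u).mpr (augReachable_step c f s v u ((hS v).mp hv) (Or.inr hpos)))
  have hval : flowValue f s = cutCap c S := by
    rw [flowValue_eq_cut f s t hcons S hsS htS]
    have h1 : ∑ u ∈ S, ∑ v ∈ Sᶜ, f u v = ∑ u ∈ S, ∑ v ∈ Sᶜ, c u v :=
      Finset.sum_congr rfl fun u hu => Finset.sum_congr rfl fun v hv =>
        hsat u hu v (Finset.mem_compl.mp hv)
    have h2 : ∑ u ∈ Sᶜ, ∑ v ∈ S, f u v = 0 :=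
      Finset.sum_eq_zero fun u hu => Finset.sum_eq_zero fun v hv =>
        hzero u (Finset.mem_compl.mp hu) v hv
    rw [h1, h2]
    simp [cutCap]
  refine ⟨htS, hsat, hzero, hval, ?_, ?_⟩
  · intro g hgfeas hgcons
    calc flowValue g s ≤ cutCap c S := flowValue_le_cutCap c g s t hgfeas hgcons S hsS htS
      _ = flowValue f s := hval.symm
  · intro S' hs' ht'
    calc cutCap c S = flowValue f s := hval.symm
      _ ≤ cutCap c S' := flowValue_le_cutCap c f s t hfeas hcons S' hs' ht'
end
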